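/- arXiv:2308.07424 — 2 statements merged into one kernel-verified Lean document; each statement's English description precedes it below -/
import Mathlib

section
/- Let μ be a σ-finite measure on a measurable space 𝒳, T : 𝒳 → ℝ^p measurable, and p₀, p₁ : 𝒳 → [0,∞) measurable source joint densities with ∫(p₀+p₁)dμ = 1; set p(x) = p₀(x)+p₁(x) and η_i(x) = p_i(x)/p(x) on {p > 0}. Let q : 𝒳 → [0,∞) be a target marginal density with ∫ q dμ = 1 and q(x) = 0 μ-a.e. on {p = 0}. Fix parameters θ_i ∈ ℝ^p, α*_i ∈ ℝ (i ∈ {0,1}) and let N = ∫ Σ_{i∈{0,1}} p_i(x)·exp(θ_i·T(x) + α*_i) dμ, assumed to satisfy 0 < N < ∞; set α_i = α*_i − log N and r(x) = Σ_{i∈{0,1}} p_i(x)·exp(θ_i·T(x) + α_i). Assume ∫ q·log(q/p) dμ and ∫ q(x)·log(Σ_i η_i(x)·exp(θ_i·T(x)+α*_i)) dμ exist and are finite. Then (a) ∫ r dμ = 1 (the normalization constraint holds), and (b) the Kullback–Leibler divergence satisfies ∫ q·log(q/r) dμ = ∫ q·log(q/p) dμ − ( ∫ q(x)·log(Σ_{i∈{0,1}}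 η_i(x)·exp(θ_i·T(x)+α*_i)) dμ − log N ), where the first term on the right does not depend on (θ, α*). -/
/-!
Write `A = ∑ i, p_i exp (θ_i·T + α*_i)`. Shifting every exponent by `-log N` gives `r = A / N`,
whence `∫ r = 1`, and `∑ i, η_i exp (θ_i·T + α*_i) = A / p`. Where `q ≠ 0` we have `p ≠ 0`,
hence `A > 0`, so `q log (q / r) = q log (q / p) - q log (A / p) + q log N` almost everywhere;
integrating and using `∫ q = 1` gives the decomposition.
-/

open MeasureTheory Real

theorem Finset.sum_mul_exp_add_eq_div {ι : Type*} (s : Finset ι) (f g a α : ι → ℝ) {N : ℝ}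
    (hα : ∀ i, α i = a i - log N) (hN : 0 < N) :
    ∑ i ∈ s, f i * exp (g i + α i) = (∑ i ∈ s, f i * exp (g i + a i)) / N := by
  rw [Finset.sum_div]
  refine Finset.sum_congr rfl fun i _ => ?_
  rw [hα, ← add_sub_assoc, exp_sub, exp_log hN, mul_div_assoc]

theorem Finset.sum_mul_exp_pos {ι : Type*} {s : Finset ι} {w c : ι → ℝ}
    (hw : ∀ i ∈ s, 0 ≤ w i) (hsum : ∑ i ∈ s, w i ≠ 0) : 0 < ∑ i ∈ s, w i * exp (c i) := by
  obtain ⟨i, hi, hwi⟩ : ∃ i ∈ s, w i ≠ 0 := by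
    by_contra! h
    exact hsum (Finset.sum_eq_zero h)
  exact Finset.sum_pos' (fun j hj => mul_nonneg (hw j hj) (exp_pos _).le)
    ⟨i, hi, mul_pos ((hw i hi).lt_of_ne' hwi) (exp_pos _)⟩

theorem mul_log_div_div_eq {q P A N : ℝ} (hP : q ≠ 0 → P ≠ 0) (hA : P ≠ 0 → A ≠ 0)
    (hN : N ≠ 0) :
    q * log (q / (A / N)) = q * log (q / P) - q * log (A / P) + q * log N := by
  rcases eq_or_ne q 0 with rfl | hq
  · simp
  have hP := hP hq
  rw [div_div_eq_mul_div, log_div (mul_ne_zero hq hN) (hA hP), log_mul hq hN,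
    log_div hq hP, log_div (hA hP) hP]
  ring

theorem stmt_6_general {X : Type*} [MeasurableSpace X] (μ : Measure X)
    {d : ℕ} (T : X → Fin d → ℝ)
    (p : Fin 2 → X → ℝ) (hp_nonneg : ∀ i x, 0 ≤ p i x)
    (q : X → ℝ)
    (hq_int : Integrable q μ) (hq_one : ∫ x, q x ∂μ = 1)
    (hq_ac : ∀ᵐ x ∂μ, p 0 x + p 1 x = 0 → q x = 0)
    (η : Fin 2 → X → ℝ) (hη : ∀ i x, η i x = p i x / (p 0 x + p 1 x))
    (θ : Fin 2 → Fin d → ℝ) (αs : Fin 2 → ℝ)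
    (N : ℝ)
    (hN_def : N = ∫ x, ∑ i, p i x * Real.exp ((∑ j, θ i j * T x j) + αs i) ∂μ)
    (hN_pos : 0 < N)
    (α : Fin 2 → ℝ) (hα : ∀ i, α i = αs i - Real.log N)
    (r : X → ℝ)
    (hr : ∀ x, r x = ∑ i, p i x * Real.exp ((∑ j, θ i j * T x j) + α i))
    (hint_qp : Integrable (fun x => q x * Real.log (q x / (p 0 x + p 1 x))) μ)
    (hint_qη : Integrable
      (fun x => q x * Real.log (∑ i, η i x * Real.exp ((∑ j, θ i j * T x j) + αs i))) μ) :
    (∫ x, r x ∂μ = 1) ∧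
      ∫ x, q x * Real.log (q x / r x) ∂μ
        = (∫ x, q x * Real.log (q x / (p 0 x + p 1 x)) ∂μ)
          - ((∫ x, q x * Real.log
                (∑ i, η i x * Real.exp ((∑ j, θ i j * T x j) + αs i)) ∂μ)
              - Real.log N) := by
  have hr_div : ∀ x, r x = (∑ i, p i x * exp ((∑ j, θ i j * T x j) + αs i)) / N :=
    fun x => (hr x).trans (Finset.sum_mul_exp_add_eq_div _ _ _ _ _ hα hN_pos)
  refine ⟨by simp_rw [hr_div]; rw [integral_div, ← hN_def, div_self hN_pos.ne'], ?_⟩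
  have hsplit : ∀ᵐ x ∂μ, q x * log (q x / r x) = q x * log (q x / (p 0 x + p 1 x))
      - q x * log (∑ i, η i x * exp ((∑ j, θ i j * T x j) + αs i)) + q x * log N := by
    filter_upwards [hq_ac] with x hx
    have hη_sum : ∑ i, η i x * exp ((∑ j, θ i j * T x j) + αs i)
        = (∑ i, p i x * exp ((∑ j, θ i j * T x j) + αs i)) / (p 0 x + p 1 x) := by
      simp only [hη, div_mul_eq_mul_div, ← Finset.sum_div]
    rw [hr_div, hη_sum]
    refine mul_log_div_div_eq (fun hq hP => hq (hx hP)) (fun hP => ?_) hN_pos.ne'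
    refine (Finset.sum_mul_exp_pos (fun i _ => hp_nonneg i x) ?_).ne'
    rwa [Fin.sum_univ_two]
  rw [integral_congr_ae hsplit, integral_add (hint_qp.sub' hint_qη) (hq_int.mul_const _),
    integral_sub hint_qp hint_qη, integral_mul_const, hq_one]
  ring

/-- For the normalized exponential tilt mixture
`r = ∑ i, p_i · exp(θ_i·T + α_i)` with `α_i = α*_i − log N`:
(a) `∫ r dμ = 1`, and (b) the KL divergence decomposition
`∫ q log(q/r) = ∫ q log(q/p) − (∫ q log(∑ η_i exp(θ_i·T+α*_i)) − log N)`. -/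
theorem stmt_6 {X : Type*} [MeasurableSpace X] (μ : Measure X) [SigmaFinite μ]
    {d : ℕ} (T : X → Fin d → ℝ) (hT : Measurable T)
    (p : Fin 2 → X → ℝ) (hp_meas : ∀ i, Measurable (p i)) (hp_nonneg : ∀ i x, 0 ≤ p i x)
    (hp_int : Integrable (fun x => p 0 x + p 1 x) μ)
    (hp_one : ∫ x, (p 0 x + p 1 x) ∂μ = 1)
    (q : X → ℝ) (hq_meas : Measurable q) (hq_nonneg : ∀ x, 0 ≤ q x)
    (hq_int : Integrable q μ) (hq_one : ∫ x, q x ∂μ = 1)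
    (hq_ac : ∀ᵐ x ∂μ, p 0 x + p 1 x = 0 → q x = 0)
    (η : Fin 2 → X → ℝ) (hη : ∀ i x, η i x = p i x / (p 0 x + p 1 x))
    (θ : Fin 2 → Fin d → ℝ) (αs : Fin 2 → ℝ)
    (N : ℝ)
    (hN_def : N = ∫ x, ∑ i, p i x * Real.exp ((∑ j, θ i j * T x j) + αs i) ∂μ)
    (hN_int : Integrable (fun x => ∑ i, p i x * Real.exp ((∑ j, θ i j * T x j) + αs i)) μ)
    (hN_pos : 0 < N)
    (α : Fin 2 → ℝ) (hα : ∀ i, α i = αs i - Real.log N)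
    (r : X → ℝ)
    (hr : ∀ x, r x = ∑ i, p i x * Real.exp ((∑ j, θ i j * T x j) + α i))
    (hint_qp : Integrable (fun x => q x * Real.log (q x / (p 0 x + p 1 x))) μ)
    (hint_qη : Integrable
      (fun x => q x * Real.log (∑ i, η i x * Real.exp ((∑ j, θ i j * T x j) + αs i))) μ) :
    (∫ x, r x ∂μ = 1) ∧
      ∫ x, q x * Real.log (q x / r x) ∂μ
        = (∫ x, q x * Real.log (q x / (p 0 x + p 1 x)) ∂μ)
          - ((∫ x, q x * Real.log
                (∑ i, η i x * Real.exp ((∑ j, θ i j * T x j) + αs i)) ∂μ)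
              - Real.log N) :=
  stmt_6_general μ T p hp_nonneg q hq_int hq_one hq_ac η hη θ αs N hN_def hN_pos α hα r hr hint_qp
    hint_qη
end

section
/- Let 𝒳 be a measurable space, T : 𝒳 → ℝ^p a measurable map, and p₀, p₁ : 𝒳 → [0,∞) source class-conditional joint densities. For each class i ∈ {0,1} suppose there is an anchor set 𝒮_i ⊆ 𝒳, i.e. p_i(x) > 0 and p_j(x) = 0 for j ≠ i for every x ∈ 𝒮_i, and suppose the affine span of T(𝒮_i) is all of ℝ^p (equivalently, the set {(T(x),1) : x ∈ 𝒮_i} spans ℝ^{p+1}). If two parameter families (θ_i, α_i)_{i∈{0,1}} and (θ'_i, α'_i)_{i∈{0,1}} in ℝ^p × ℝ satisfy Σ_{i∈{0,1}} p_i(x)·exp(θ_i·T(x) + α_i) = Σ_{i∈{0,1}} p_i(x)·exp(θ'_i·T(x) + α'_i) for every x ∈ 𝒳, then θ_i = θ'_i and α_i = α'_i for i ∈ {0,1}; i.e., the exponential tilt model is identifiable. -/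
/-!
On an anchor point of class `i` only the `i`-th term of the mixture survives, so the two
exponents `θ_i ⬝ᵥ T x + α_i` and `θ'_i ⬝ᵥ T x + α'_i` agree there. Two affine functions that agree
on an affinely spanning set are equal, which forces `θ_i = θ'_i` and `α_i = α'_i`.
-/

open Matrix

theorem eq_of_dotProduct_add_eqOn {R n : Type*} [CommRing R] [Fintype n] [DecidableEq n]
    {s : Set (n → R)} (hs : affineSpan R s = ⊤) {a a' : n → R} {b b' : R}
    (h : ∀ y ∈ s, a ⬝ᵥ y + b = a' ⬝ᵥ y + b') : a = a' ∧ b = b' := by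
  let f : (n → R) → R → (n → R) →ᵃ[R] R := fun c e =>
    (dotProductEquiv R n c).toAffineMap + AffineMap.const R (n → R) e
  have hf : ∀ c e y, f c e y = c ⬝ᵥ y + e := fun _ _ _ => rfl
  have hext : f a b = f a' b' := AffineMap.ext_on hs fun y hy => by simp only [hf, h y hy]
  have hb : b = b' := by simpa [hf] using congrArg (· 0) hext
  refine ⟨funext fun k => ?_, hb⟩
  simpa [hf, hb] using congrArg (· (Pi.single k 1)) hext

theorem exponent_eq_of_sum_mul_exp_eq {ι : Type*} [Fintype ι] {w u v : ι → ℝ} {i : ι}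
    (hwi : w i ≠ 0) (hw : ∀ j, j ≠ i → w j = 0)
    (h : ∑ j, w j * Real.exp (u j) = ∑ j, w j * Real.exp (v j)) : u i = v i := by
  have hsingle : ∀ f : ι → ℝ, ∑ j, w j * f j = w i * f i := fun f =>
    Fintype.sum_eq_single i fun j hj => by rw [hw j hj, zero_mul]
  rw [hsingle, hsingle] at h
  exact Real.exp_injective (mul_left_cancel₀ hwi h)

theorem stmt_8_general {X : Type*}
    {d : ℕ} (T : X → Fin d → ℝ)
    (p : Fin 2 → X → ℝ)
    (S : Fin 2 → Set X)
    (hanchor : ∀ i, ∀ x ∈ S i, 0 < p i x ∧ ∀ j, j ≠ i → p j x = 0)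
    (hspan : ∀ i, affineSpan ℝ (T '' S i) = ⊤)
    (θ θ' : Fin 2 → Fin d → ℝ) (α α' : Fin 2 → ℝ)
    (heq : ∀ x, ∑ i, p i x * Real.exp ((∑ j, θ i j * T x j) + α i)
              = ∑ i, p i x * Real.exp ((∑ j, θ' i j * T x j) + α' i)) :
    θ = θ' ∧ α = α' := by
  have hclass : ∀ i, θ i = θ' i ∧ α i = α' i := fun i =>
    eq_of_dotProduct_add_eqOn (hspan i) <| by
      rintro - ⟨x, hx, rfl⟩
      obtain ⟨hpos, hzero⟩ := hanchor i x hx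
      exact exponent_eq_of_sum_mul_exp_eq (w := fun k => p k x) hpos.ne' hzero (heq x)
  exact ⟨funext fun i => (hclass i).1, funext fun i => (hclass i).2⟩

/-- Identifiability of the exponential tilt model: if each class has an anchor
set whose image under the sufficient statistic `T` affinely spans `ℝ^p`, then
the tilt parameters `(θ_i, α_i)` are uniquely determined by the tilted mixture. -/
theorem stmt_8 {X : Type*} [MeasurableSpace X]
    {d : ℕ} (T : X → Fin d → ℝ) (hT : Measurable T)
    (p : Fin 2 → X → ℝ) (hp_nonneg : ∀ i x, 0 ≤ p i x)
    (S : Fin 2 → Set X)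
    (hanchor : ∀ i, ∀ x ∈ S i, 0 < p i x ∧ ∀ j, j ≠ i → p j x = 0)
    (hspan : ∀ i, affineSpan ℝ (T '' S i) = ⊤)
    (θ θ' : Fin 2 → Fin d → ℝ) (α α' : Fin 2 → ℝ)
    (heq : ∀ x, ∑ i, p i x * Real.exp ((∑ j, θ i j * T x j) + α i)
              = ∑ i, p i x * Real.exp ((∑ j, θ' i j * T x j) + α' i)) :
    θ = θ' ∧ α = α' :=
  stmt_8_general T p S hanchor hspan θ θ' α α' heq
end
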